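/- Let R be a ring, M a right R-module, W = End_R(M), and α an anti-endomorphism of W such that α ∘ α is an inner automorphism of W. Then b_α is right regular if and only if it is left regular, and b_α is right injective if and only if it is left injective. -/

import Mathlib

open MulOpposite TensorProduct Function

universe u v w v'

section Core

/-- An anti-endomorphism of a ring: additive, unital, reverses multiplication. -/
def IsAntiEndo {W : Type*} [Ring W] (α : W → W) : Prop :=
  (∀ u v : W, α (u + v) = α u + α v) ∧ α 1 = 1 ∧ ∀ u v : W, α (u * v) = α v * α u

/-- An anti-automorphism of a ring: a bijective anti-endomorphism. -/
def IsAntiAuto {W : Type*} [Ring W] (α : W → W) : Prop :=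
  IsAntiEndo α ∧ Function.Bijective α

/-- An inner automorphism of a ring: conjugation by a unit. -/
def IsInnerAut {W : Type*} [Ring W] (φ : W → W) : Prop :=
  ∃ u : Wˣ, ∀ w : W, φ w = ↑u * w * ↑u⁻¹

variable (R : Type u) [Ring R]

/-- A double `R`-module structure on the additive group `K`: two commuting
right `R`-module structures `m0` and `m1`. -/
structure DoubleModule (K : Type v) [AddCommGroup K] where
  m0 : K → R → K
  m1 : K → R → K
  m0_add_left : ∀ (k k' : K) (r : R), m0 (k + k') r = m0 k r + m0 k' r
  m0_add_right : ∀ (k : K) (r r' : R), m0 k (r + r') = m0 k r + m0 k r'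
  m0_mul : ∀ (k : K) (r r' : R), m0 k (r * r') = m0 (m0 k r) r'
  m0_one : ∀ k : K, m0 k 1 = k
  m1_add_left : ∀ (k k' : K) (r : R), m1 (k + k') r = m1 k r + m1 k' r
  m1_add_right : ∀ (k : K) (r r' : R), m1 k (r + r') = m1 k r + m1 k r'
  m1_mul : ∀ (k : K) (r r' : R), m1 k (r * r') = m1 (m1 k r) r'
  m1_one : ∀ k : K, m1 k 1 = k
  comm : ∀ (k : K) (a b : R), m1 (m0 k a) b = m0 (m1 k b) a

variable {R}

/-- A homomorphism of double `R`-modules. -/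
def IsDoubleHom {K : Type v} {K' : Type w} [AddCommGroup K] [AddCommGroup K']
    (DK : DoubleModule R K) (DK' : DoubleModule R K') (f : K → K') : Prop :=
  (∀ k k' : K, f (k + k') = f k + f k') ∧
  (∀ (k : K) (r : R), f (DK.m0 k r) = DK'.m0 (f k) r) ∧
  (∀ (k : K) (r : R), f (DK.m1 k r) = DK'.m1 (f k) r)

/-- An isomorphism of double `R`-modules. -/
def IsDoubleIso {K : Type v} {K' : Type w} [AddCommGroup K] [AddCommGroup K']
    (DK : DoubleModule R K) (DK' : DoubleModule R K') (f : K → K') : Prop :=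
  IsDoubleHom DK DK' f ∧ Function.Bijective f

/-- An anti-automorphism of a double `R`-module: an additive bijection exchanging
the two module structures. -/
def IsDoubleAntiAuto {K : Type v} [AddCommGroup K] (DK : DoubleModule R K) (θ : K → K) : Prop :=
  Function.Bijective θ ∧ (∀ k k' : K, θ (k + k') = θ k + θ k') ∧
  (∀ (k : K) (r : R), θ (DK.m0 k r) = DK.m1 (θ k) r) ∧
  (∀ (k : K) (r : R), θ (DK.m1 k r) = DK.m0 (θ k) r)

variable (R)

/-- A general bilinear form on a right `R`-module `M` (encoded as a module over `Rᵐᵒᵖ`)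
with values in a double `R`-module `(K, DK)`. -/
structure GBF (M : Type v) [AddCommGroup M] [Module Rᵐᵒᵖ M]
    (K : Type w) [AddCommGroup K] (DK : DoubleModule R K) where
  b : M → M → K
  add_left : ∀ x x' y : M, b (x + x') y = b x y + b x' y
  add_right : ∀ x y y' : M, b x (y + y') = b x y + b x y'
  smul_left : ∀ (x y : M) (r : R), b (op r • x) y = DK.m0 (b x y) r
  smul_right : ∀ (x y : M) (r : R), b x (op r • y) = DK.m1 (b x y) r

variable {R}

namespace GBF

variable {M : Type v} [AddCommGroup M] [Module Rᵐᵒᵖ M]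
  {K : Type w} [AddCommGroup K] {DK : DoubleModule R K}

/-- The right adjoint of `β` is injective. -/
def RightInjective (β : GBF R M K DK) : Prop :=
  ∀ x x' : M, (∀ y : M, β.b y x = β.b y x') → x = x'

/-- The right adjoint of `β` is bijective onto `Hom_R(M, K₀)`. -/
def RightRegular (β : GBF R M K DK) : Prop :=
  β.RightInjective ∧
  ∀ f : M → K, (∀ y y' : M, f (y + y') = f y + f y') →
    (∀ (y : M) (r : R), f (op r • y) = DK.m0 (f y) r) →
    ∃ x : M, ∀ y : M, f y = β.b y x

/-- The left adjoint of `β` is injective. -/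
def LeftInjective (β : GBF R M K DK) : Prop :=
  ∀ x x' : M, (∀ y : M, β.b x y = β.b x' y) → x = x'

/-- The left adjoint of `β` is bijective onto `Hom_R(M, K₁)`. -/
def LeftRegular (β : GBF R M K DK) : Prop :=
  β.LeftInjective ∧
  ∀ f : M → K, (∀ y y' : M, f (y + y') = f y + f y') →
    (∀ (y : M) (r : R), f (op r • y) = DK.m1 (f y) r) →
    ∃ x : M, ∀ y : M, f y = β.b x y

/-- `α` is an adjoint anti-endomorphism for `β`: `β(w x, y) = β(x, α(w) y)`. -/
def IsAdjoint (β : GBF R M K DK) (α : Module.End Rᵐᵒᵖ M → Module.End Rᵐᵒᵖ M) : Prop :=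
  ∀ (w : Module.End Rᵐᵒᵖ M) (x y : M), β.b (w x) y = β.b x (α w y)

/-- Similarity of general bilinear forms on the same module. -/
def Similar {K' : Type v'} [AddCommGroup K'] {DK' : DoubleModule R K'}
    (β : GBF R M K DK) (β' : GBF R M K' DK') : Prop :=
  ∃ f : K → K', IsDoubleIso DK DK' f ∧ ∀ x y : M, β'.b x y = f (β.b x y)

end GBF

section Kalpha

variable {M : Type v} [AddCommGroup M] [Module Rᵐᵒᵖ M]

/-- The subgroup of `M ⊗_ℤ M` generated by the elements `(w x) ⊗ y - x ⊗ (α w y)`. -/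
def kalphaRel (α : Module.End Rᵐᵒᵖ M → Module.End Rᵐᵒᵖ M) : Submodule ℤ (M ⊗[ℤ] M) :=
  Submodule.span ℤ
    {z | ∃ (w : Module.End Rᵐᵒᵖ M) (x y : M), z = (w x) ⊗ₜ[ℤ] y - x ⊗ₜ[ℤ] (α w y)}

/-- `K_α`, the quotient of `M ⊗_ℤ M` by the relations `(w x) ⊗ y = x ⊗ (α w y)`. -/
abbrev Kalpha (α : Module.End Rᵐᵒᵖ M → Module.End Rᵐᵒᵖ M) : Type _ :=
  (M ⊗[ℤ] M) ⧸ kalphaRel α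

/-- The map `x ⊗ y ↦ (x·r) ⊗ y` on `M ⊗_ℤ M`. -/
noncomputable def smulLeftMap (r : R) : (M ⊗[ℤ] M) →ₗ[ℤ] (M ⊗[ℤ] M) :=
  TensorProduct.map ((DistribMulAction.toAddMonoidHom M (op r : Rᵐᵒᵖ)).toIntLinearMap)
    LinearMap.id

/-- The map `x ⊗ y ↦ x ⊗ (y·r)` on `M ⊗_ℤ M`. -/
noncomputable def smulRightMap (r : R) : (M ⊗[ℤ] M) →ₗ[ℤ] (M ⊗[ℤ] M) :=
  TensorProduct.map LinearMap.id
    ((DistribMulAction.toAddMonoidHom M (op r : Rᵐᵒᵖ)).toIntLinearMap)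

theorem smulLeftMap_tmul (r : R) (x y : M) :
    smulLeftMap (M := M) r (x ⊗ₜ[ℤ] y) = (op r • x) ⊗ₜ[ℤ] y := by
  first | rfl | exact TensorProduct.map_tmul _ _ _ _

theorem smulRightMap_tmul (r : R) (x y : M) :
    smulRightMap (M := M) r (x ⊗ₜ[ℤ] y) = x ⊗ₜ[ℤ] (op r • y) := by
  first | rfl | exact TensorProduct.map_tmul _ _ _ _

theorem kalphaRel_le_left (α : Module.End Rᵐᵒᵖ M → Module.End Rᵐᵒᵖ M) (r : R) :
    kalphaRel α ≤ (kalphaRel α).comap (smulLeftMap (M := M) r) := by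
  rw [kalphaRel, Submodule.span_le]
  rintro _ ⟨w, x, y, rfl⟩
  rw [SetLike.mem_coe, Submodule.mem_comap, map_sub]
  have h1 : smulLeftMap (M := M) r ((w x) ⊗ₜ[ℤ] y) = (w (op r • x)) ⊗ₜ[ℤ] y := by
    rw [smulLeftMap_tmul, map_smul]
  have h2 : smulLeftMap (M := M) r (x ⊗ₜ[ℤ] (α w y)) = (op r • x) ⊗ₜ[ℤ] (α w y) := by
    rw [smulLeftMap_tmul]
  rw [h1, h2]
  exact Submodule.subset_span ⟨w, op r • x, y, rfl⟩

theorem kalphaRel_le_right (α : Module.End Rᵐᵒᵖ M → Module.End Rᵐᵒᵖ M) (r : R) :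
    kalphaRel α ≤ (kalphaRel α).comap (smulRightMap (M := M) r) := by
  rw [kalphaRel, Submodule.span_le]
  rintro _ ⟨w, x, y, rfl⟩
  rw [SetLike.mem_coe, Submodule.mem_comap, map_sub]
  have h1 : smulRightMap (M := M) r ((w x) ⊗ₜ[ℤ] y) = (w x) ⊗ₜ[ℤ] (op r • y) := by
    rw [smulRightMap_tmul]
  have h2 : smulRightMap (M := M) r (x ⊗ₜ[ℤ] (α w y)) = x ⊗ₜ[ℤ] (α w (op r • y)) := by
    rw [smulRightMap_tmul, map_smul]
  rw [h1, h2]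
  exact Submodule.subset_span ⟨w, x, op r • y, rfl⟩

/-- The `m0`-action on `K_α`. -/
noncomputable def kSmul0 (α : Module.End Rᵐᵒᵖ M → Module.End Rᵐᵒᵖ M) (r : R) :
    Kalpha α →ₗ[ℤ] Kalpha α :=
  Submodule.mapQ _ _ (smulLeftMap r) (kalphaRel_le_left α r)

/-- The `m1`-action on `K_α`. -/
noncomputable def kSmul1 (α : Module.End Rᵐᵒᵖ M → Module.End Rᵐᵒᵖ M) (r : R) :
    Kalpha α →ₗ[ℤ] Kalpha α :=
  Submodule.mapQ _ _ (smulRightMap r) (kalphaRel_le_right α r)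

theorem kSmul0_mk (α : Module.End Rᵐᵒᵖ M → Module.End Rᵐᵒᵖ M) (r : R) (t : M ⊗[ℤ] M) :
    kSmul0 α r (Submodule.Quotient.mk t) = Submodule.Quotient.mk (smulLeftMap r t) := rfl

theorem kSmul1_mk (α : Module.End Rᵐᵒᵖ M → Module.End Rᵐᵒᵖ M) (r : R) (t : M ⊗[ℤ] M) :
    kSmul1 α r (Submodule.Quotient.mk t) = Submodule.Quotient.mk (smulRightMap r t) := rfl

/-- The double `R`-module structure on `K_α`. -/
noncomputable def KalphaDM (α : Module.End Rᵐᵒᵖ M → Module.End Rᵐᵒᵖ M) :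
    DoubleModule R (Kalpha α) where
  m0 k r := kSmul0 α r k
  m1 k r := kSmul1 α r k
  m0_add_left k k' r := map_add _ k k'
  m0_add_right := by
    intro k r r'
    induction k using Submodule.Quotient.induction_on with
    | _ t =>
      rw [kSmul0_mk, kSmul0_mk, kSmul0_mk, ← Submodule.Quotient.mk_add]
      congr 1
      induction t with
      | zero => simp
      | tmul x y => simp [smulLeftMap_tmul, op_add, add_smul, TensorProduct.add_tmul]
      | add a b ha hb => rw [map_add, map_add, map_add, ha, hb]; abel
  m0_mul := by
    intro k r r'
    induction k using Submodule.Quotient.induction_on with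
    | _ t =>
      rw [kSmul0_mk, kSmul0_mk, kSmul0_mk]
      congr 1
      induction t with
      | zero => simp
      | tmul x y => simp [smulLeftMap_tmul, op_mul, mul_smul]
      | add a b ha hb => rw [map_add, map_add, map_add, ha, hb]
  m0_one := by
    intro k
    induction k using Submodule.Quotient.induction_on with
    | _ t =>
      rw [kSmul0_mk]
      congr 1
      induction t with
      | zero => simp
      | tmul x y => simp [smulLeftMap_tmul]
      | add a b ha hb => rw [map_add, ha, hb]
  m1_add_left k k' r := map_add _ k k'
  m1_add_right := by
    intro k r r'
    induction k using Submodule.Quotient.induction_on with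
    | _ t =>
      rw [kSmul1_mk, kSmul1_mk, kSmul1_mk, ← Submodule.Quotient.mk_add]
      congr 1
      induction t with
      | zero => simp
      | tmul x y => simp [smulRightMap_tmul, op_add, add_smul, TensorProduct.tmul_add]
      | add a b ha hb => rw [map_add, map_add, map_add, ha, hb]; abel
  m1_mul := by
    intro k r r'
    induction k using Submodule.Quotient.induction_on with
    | _ t =>
      rw [kSmul1_mk, kSmul1_mk, kSmul1_mk]
      congr 1
      induction t with
      | zero => simp
      | tmul x y => simp [smulRightMap_tmul, op_mul, mul_smul]
      | add a b ha hb => rw [map_add, map_add, map_add, ha, hb]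
  m1_one := by
    intro k
    induction k using Submodule.Quotient.induction_on with
    | _ t =>
      rw [kSmul1_mk]
      congr 1
      induction t with
      | zero => simp
      | tmul x y => simp [smulRightMap_tmul]
      | add a b ha hb => rw [map_add, ha, hb]
  comm := by
    intro k a c
    induction k using Submodule.Quotient.induction_on with
    | _ t =>
      rw [kSmul0_mk, kSmul1_mk, kSmul1_mk, kSmul0_mk]
      congr 1
      induction t with
      | zero => simp
      | tmul x y => simp [smulLeftMap_tmul, smulRightMap_tmul]
      | add p q hp hq => rw [map_add, map_add, map_add, map_add, hp, hq]

/-- The universal general bilinear form `b_α : M × M → K_α`. -/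
noncomputable def balpha (α : Module.End Rᵐᵒᵖ M → Module.End Rᵐᵒᵖ M) :
    GBF R M (Kalpha α) (KalphaDM α) where
  b x y := Submodule.Quotient.mk (x ⊗ₜ[ℤ] y)
  add_left x x' y := by
    rw [TensorProduct.add_tmul, Submodule.Quotient.mk_add]
  add_right x y y' := by
    rw [TensorProduct.tmul_add, Submodule.Quotient.mk_add]
  smul_left x y r := by
    show _ = kSmul0 α r (Submodule.Quotient.mk (x ⊗ₜ[ℤ] y))
    rw [kSmul0_mk]
    congr 1
  smul_right x y r := by
    show _ = kSmul1 α r (Submodule.Quotient.mk (x ⊗ₜ[ℤ] y))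
    rw [kSmul1_mk]
    congr 1

end Kalpha

end Core

/-!
Write `α ∘ α = (w ↦ u w u⁻¹)`. The universal property of `K_α` turns the form
`(x, y) ↦ b_α(y, u x)`, for which `α` is again adjoint, into an additive map `θ` of `K_α`
exchanging its two module structures, with `θ (x ⊗ y) = y ⊗ u x`. Since `α ∘ α` is also
conjugation by `α(u⁻¹)`, the same construction for that unit gives a left inverse of `θ`.
Composing with `θ` and `u` then turns right adjoints into left adjoints and back.
-/

namespace DoubleModule

variable {R : Type u} [Ring R] {K : Type v} [AddCommGroup K]

@[simps]
def swap (DK : DoubleModule R K) : DoubleModule R K where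
  m0 := DK.m1
  m1 := DK.m0
  m0_add_left := DK.m1_add_left
  m0_add_right := DK.m1_add_right
  m0_mul := DK.m1_mul
  m0_one := DK.m1_one
  m1_add_left := DK.m0_add_left
  m1_add_right := DK.m0_add_right
  m1_mul := DK.m0_mul
  m1_one := DK.m0_one
  comm k a b := (DK.comm k b a).symm

end DoubleModule

section UnitsEnd

variable {R : Type u} [Ring R] {M : Type v} [AddCommGroup M] [Module Rᵐᵒᵖ M]

theorem units_inv_apply_apply (u : (Module.End Rᵐᵒᵖ M)ˣ) (x : M) :
    (↑u⁻¹ : Module.End Rᵐᵒᵖ M) ((u : Module.End Rᵐᵒᵖ M) x) = x := by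
  rw [← Module.End.mul_apply, u.inv_mul, Module.End.one_apply]

theorem units_apply_inv_apply (u : (Module.End Rᵐᵒᵖ M)ˣ) (x : M) :
    (u : Module.End Rᵐᵒᵖ M) ((↑u⁻¹ : Module.End Rᵐᵒᵖ M) x) = x := by
  rw [← Module.End.mul_apply, u.mul_inv, Module.End.one_apply]

end UnitsEnd

namespace IsAntiEndo

variable {W : Type*} [Ring W] {α : W → W}

def unit (hα : IsAntiEndo α) (u : Wˣ) : Wˣ where
  val := α u
  inv := α ↑u⁻¹
  val_inv := by rw [← hα.2.2, u.inv_mul, hα.2.1]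
  inv_val := by rw [← hα.2.2, u.mul_inv, hα.2.1]

theorem comp_self_eq_conj_unit_inv (hα : IsAntiEndo α) {u : Wˣ}
    (hu : ∀ w, α (α w) = ↑u * w * ↑u⁻¹) (w : W) :
    α (α w) = ↑(hα.unit u)⁻¹ * w * ↑(hα.unit u) := by
  obtain ⟨z, rfl⟩ : ∃ z, α z = w := ⟨α (↑u⁻¹ * w * ↑u), by simp [hu, mul_assoc]⟩
  rw [hu z, hα.2.2, hα.2.2, mul_assoc]
  rfl

end IsAntiEndo

namespace GBF

variable {R : Type u} [Ring R] {M : Type v} [AddCommGroup M] [Module Rᵐᵒᵖ M]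
  {K : Type w} [AddCommGroup K] {DK : DoubleModule R K}

@[simps!]
def toAddMonoidHom₂ (β : GBF R M K DK) : M →+ M →+ K :=
  AddMonoidHom.mk' (fun x => AddMonoidHom.mk' (β.b x) (β.add_right x))
    fun x x' => AddMonoidHom.ext (β.add_left x x')

def twistedTranspose (β : GBF R M K DK) (u : Module.End Rᵐᵒᵖ M) : GBF R M K DK.swap where
  b x y := β.b y (u x)
  add_left x x' y := by rw [map_add, β.add_right]
  add_right x y y' := β.add_left y y' (u x)
  smul_left x y r := by rw [map_smul, β.smul_right]; rfl
  smul_right x y r := β.smul_left y (u x) r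

theorem IsAdjoint.twistedTranspose {β : GBF R M K DK}
    {α : Module.End Rᵐᵒᵖ M → Module.End Rᵐᵒᵖ M} (hβ : β.IsAdjoint α)
    {u : (Module.End Rᵐᵒᵖ M)ˣ} (hu : ∀ w, α (α w) = ↑u * w * ↑u⁻¹) :
    (β.twistedTranspose u).IsAdjoint α := by
  intro w x y
  change β.b y ((u : Module.End Rᵐᵒᵖ M) (w x))
    = β.b (α w y) ((u : Module.End Rᵐᵒᵖ M) x)
  rw [hβ, hu, Module.End.mul_apply, Module.End.mul_apply, units_inv_apply_apply]

variable (β : GBF R M K DK) {θ : K → K} {u : (Module.End Rᵐᵒᵖ M)ˣ}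

theorem rightInjective_iff_leftInjective_of_twist
    (hθ : ∀ x y, θ (β.b x y) = β.b y ((u : Module.End Rᵐᵒᵖ M) x)) :
    β.RightInjective ↔ β.LeftInjective := by
  have hu := (Module.End.isUnit_iff _).mp u.isUnit
  constructor
  · intro hR x x' h
    exact hu.injective <| hR _ _ fun y => by rw [← hθ, ← hθ, h]
  · intro hL x x' h
    refine hL _ _ fun y => ?_
    obtain ⟨z, rfl⟩ := hu.surjective y
    rw [← hθ, ← hθ, h]

theorem rightRegular_iff_leftRegular_of_twist
    (hθ : ∀ x y, θ (β.b x y) = β.b y ((u : Module.End Rᵐᵒᵖ M) x))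
    (hθhom : IsDoubleHom DK DK.swap θ) (hθinj : Injective θ) :
    β.RightRegular ↔ β.LeftRegular := by
  obtain ⟨hadd, hm0, hm1⟩ := hθhom
  refine and_congr (β.rightInjective_iff_leftInjective_of_twist hθ)
    ⟨fun hR f hfadd hfsmul => ?_, fun hL f hfadd hfsmul => ?_⟩
  · obtain ⟨x, hx⟩ := hR (θ ∘ f) (by simp [hfadd, hadd]) (by simp [hfsmul, hm1])
    refine ⟨(↑u⁻¹ : Module.End Rᵐᵒᵖ M) x, fun y => hθinj ?_⟩
    rw [hθ, units_apply_inv_apply]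
    exact hx y
  · obtain ⟨x, hx⟩ := hL (fun z => θ (f ((↑u⁻¹ : Module.End Rᵐᵒᵖ M) z)))
      (by simp [hfadd, hadd]) (by simp [hfsmul, hm0])
    refine ⟨x, fun y => hθinj ?_⟩
    rw [hθ, ← hx, units_inv_apply_apply]

end GBF

section KalphaUniversal

variable {R : Type u} [Ring R] {M : Type v} [AddCommGroup M] [Module Rᵐᵒᵖ M]
  {α : Module.End Rᵐᵒᵖ M → Module.End Rᵐᵒᵖ M}

theorem balpha_isAdjoint : (balpha α).IsAdjoint α := fun w x y =>
  (Submodule.Quotient.eq _).mpr (Submodule.subset_span ⟨w, x, y, rfl⟩)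

namespace Kalpha

theorem induction_on {P : Kalpha α → Prop} (k : Kalpha α)
    (tmul : ∀ x y, P ((balpha α).b x y)) (add : ∀ k k', P k → P k' → P (k + k')) :
    P k := by
  induction k using Submodule.Quotient.induction_on with
  | _ t =>
    induction t with
    | zero => simpa [balpha] using tmul 0 0
    | tmul x y => exact tmul x y
    | add t t' ht ht' => exact add _ _ ht ht'

variable {K : Type w} [AddCommGroup K] {DK : DoubleModule R K}

noncomputable def lift (β : GBF R M K DK) (hβ : β.IsAdjoint α) : Kalpha α →+ K :=
  ((kalphaRel α).liftQ
    (TensorProduct.liftAddHom β.toAddMonoidHom₂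
      fun n x y => by rw [map_zsmul, AddMonoidHom.zsmul_apply, map_zsmul]).toIntLinearMap
    (by
      rw [kalphaRel, Submodule.span_le]
      rintro _ ⟨w, x, y, rfl⟩
      simpa using sub_eq_zero.mpr (hβ w x y))).toAddMonoidHom

@[simp] theorem lift_balpha (β : GBF R M K DK) (hβ : β.IsAdjoint α) (x y : M) :
    lift β hβ ((balpha α).b x y) = β.b x y := rfl

theorem isDoubleHom_lift (β : GBF R M K DK) (hβ : β.IsAdjoint α) :
    IsDoubleHom (KalphaDM α) DK (lift β hβ) := by
  refine ⟨map_add _, fun k r => ?_, fun k r => ?_⟩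
  · induction k using induction_on with
    | tmul x y => rw [← (balpha α).smul_left, lift_balpha, lift_balpha, β.smul_left]
    | add k k' hk hk' => rw [(KalphaDM α).m0_add_left, map_add, map_add, hk, hk', DK.m0_add_left]
  · induction k using induction_on with
    | tmul x y => rw [← (balpha α).smul_right, lift_balpha, lift_balpha, β.smul_right]
    | add k k' hk hk' => rw [(KalphaDM α).m1_add_left, map_add, map_add, hk, hk', DK.m1_add_left]

variable {u : (Module.End Rᵐᵒᵖ M)ˣ}

noncomputable def twist (hu : ∀ w, α (α w) = ↑u * w * ↑u⁻¹) : Kalpha α →+ Kalpha α :=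
  lift ((balpha α).twistedTranspose u) (balpha_isAdjoint.twistedTranspose hu)

theorem twist_balpha (hu : ∀ w, α (α w) = ↑u * w * ↑u⁻¹) (x y : M) :
    twist hu ((balpha α).b x y) = (balpha α).b y ((u : Module.End Rᵐᵒᵖ M) x) := rfl

theorem isDoubleHom_twist (hu : ∀ w, α (α w) = ↑u * w * ↑u⁻¹) :
    IsDoubleHom (KalphaDM α) (KalphaDM α).swap (twist hu) :=
  isDoubleHom_lift _ _

theorem twist_injective (hα : IsAntiEndo α) (hu : ∀ w, α (α w) = ↑u * w * ↑u⁻¹) :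
    Injective (twist hu) := by
  refine LeftInverse.injective (g := twist (hα.comp_self_eq_conj_unit_inv hu)) fun k => ?_
  induction k using induction_on with
  | tmul x y =>
    rw [twist_balpha, twist_balpha]
    conv_rhs => rw [← units_inv_apply_apply u x]
    exact (balpha_isAdjoint _ _ _).symm
  | add k k' hk hk' => rw [map_add, map_add, hk, hk']

end Kalpha

end KalphaUniversal

/-- If `α ∘ α` is an inner automorphism of `W = End_R(M)`, then `b_α` is
right regular iff left regular, and right injective iff left injective. -/
theorem stmt_5 {R : Type u} [Ring R] {M : Type v} [AddCommGroup M] [Module Rᵐᵒᵖ M]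
    (α : Module.End Rᵐᵒᵖ M → Module.End Rᵐᵒᵖ M) (hα : IsAntiEndo α)
    (hinner : IsInnerAut (α ∘ α)) :
    ((balpha (M := M) α).RightRegular ↔ (balpha (M := M) α).LeftRegular) ∧
    ((balpha (M := M) α).RightInjective ↔ (balpha (M := M) α).LeftInjective) := by
  obtain ⟨u, hu⟩ := hinner
  have hθ := Kalpha.twist_balpha hu
  exact ⟨(balpha α).rightRegular_iff_leftRegular_of_twist hθ (Kalpha.isDoubleHom_twist hu)
    (Kalpha.twist_injective hα hu), (balpha α).rightInjective_iff_leftInjective_of_twist hθ⟩
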